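/- arXiv:2602.15754 — 2 statements merged into one kernel-verified Lean document; each statement's English description precedes it below -/
import Mathlib

section
/- If H is a Dedekind-finite monoid, then the reduced finitary power monoid P_{fin,1}(H) and the restricted finitary power monoid P_{fin,×}(H) have the same system of lengths: the family of nonempty length sets of P_{fin,1}(H) equals the family of nonempty length sets of P_{fin,×}(H). -/
open scoped Pointwise

/-- Two-sided divisibility in a monoid: `x` divides `y` if `y = u * x * v` for some `u, v`. -/
def DvdTS {M : Type*} [Monoid M] (x y : M) : Prop := ∃ u v : M, y = u * x * v

/-- A unit-divisor is a divisor of the identity. -/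
def IsUnitDivisor {M : Type*} [Monoid M] (x : M) : Prop := DvdTS x 1

/-- `x` is a proper divisor of `y` if `x` divides `y` but `y` does not divide `x`. -/
def IsProperDivisorTS {M : Type*} [Monoid M] (x y : M) : Prop := DvdTS x y ∧ ¬ DvdTS y x

/-- An atom is a non-unit that is not a product of two non-units. -/
def IsAtomTS {M : Type*} [Monoid M] (a : M) : Prop :=
  ¬ IsUnit a ∧ ∀ b c : M, a = b * c → IsUnit b ∨ IsUnit c

/-- A quark is a non-unit-divisor all of whose proper divisors are unit-divisors. -/
def IsQuarkTS {M : Type*} [Monoid M] (a : M) : Prop :=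
  ¬ IsUnitDivisor a ∧ ∀ b : M, IsProperDivisorTS b a → IsUnitDivisor b

/-- An irreducible is a non-unit-divisor with no factorization `a = b * c` into proper
divisors that are not unit-divisors. -/
def IsIrredTS {M : Type*} [Monoid M] (a : M) : Prop :=
  ¬ IsUnitDivisor a ∧
    ¬ ∃ b c : M, a = b * c ∧ IsProperDivisorTS b a ∧ IsProperDivisorTS c a ∧
      ¬ IsUnitDivisor b ∧ ¬ IsUnitDivisor c

def DedekindFiniteM (M : Type*) [Monoid M] : Prop := ∀ x y : M, x * y = 1 → y * x = 1

/-- ACC on principal two-sided ideals: no infinite sequence of consecutive proper divisors. -/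
def ACCPrincipalTS (M : Type*) [Monoid M] : Prop :=
  ¬ ∃ f : ℕ → M, ∀ n : ℕ, IsProperDivisorTS (f (n + 1)) (f n)

/-- Factorable: every non-unit-divisor is a (non-empty) product of irreducibles. -/
def FactorableM (M : Type*) [Monoid M] : Prop :=
  ∀ x : M, ¬ IsUnitDivisor x →
    ∃ l : List M, l ≠ [] ∧ (∀ a ∈ l, IsIrredTS a) ∧ l.prod = x

/-- Atomic: every non-unit-divisor is a (non-empty) product of atoms. -/
def AtomicM (M : Type*) [Monoid M] : Prop :=
  ∀ x : M, ¬ IsUnitDivisor x →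
    ∃ l : List M, l ≠ [] ∧ (∀ a ∈ l, IsAtomTS a) ∧ l.prod = x

/-- The finitary power monoid: non-empty finite subsets of `H` under setwise multiplication. -/
def PfinM (H : Type*) [Monoid H] : Submonoid (Set H) where
  carrier := {X : Set H | X.Finite ∧ X.Nonempty}
  mul_mem' := fun hX hY => ⟨hX.1.mul hY.1, hX.2.mul hY.2⟩
  one_mem' := ⟨Set.finite_one, 1, Set.mem_one.mpr rfl⟩

/-- The restricted finitary power monoid: non-empty finite subsets of `H` containing a unit. -/
def PfinTimes (H : Type*) [Monoid H] : Submonoid (Set H) where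
  carrier := {X : Set H | X.Finite ∧ ∃ u ∈ X, IsUnit u}
  mul_mem' := by
    rintro X Y ⟨hXf, u, hu, hu'⟩ ⟨hYf, v, hv, hv'⟩
    exact ⟨hXf.mul hYf, u * v, Set.mul_mem_mul hu hv, hu'.mul hv'⟩
  one_mem' := ⟨Set.finite_one, 1, Set.mem_one.mpr rfl, isUnit_one⟩

/-- The reduced finitary power monoid: finite subsets of `H` containing `1`. -/
def PfinOne (H : Type*) [Monoid H] : Submonoid (Set H) where
  carrier := {X : Set H | X.Finite ∧ (1 : H) ∈ X}
  mul_mem' := by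
    rintro X Y ⟨hXf, hX1⟩ ⟨hYf, hY1⟩
    exact ⟨hXf.mul hYf, by simpa using Set.mul_mem_mul hX1 hY1⟩
  one_mem' := ⟨Set.finite_one, Set.mem_one.mpr rfl⟩

lemma mem_PfinM {H : Type*} [Monoid H] {X : Set H} :
    X ∈ PfinM H ↔ X.Finite ∧ X.Nonempty := Iff.rfl

lemma mem_PfinTimes {H : Type*} [Monoid H] {X : Set H} :
    X ∈ PfinTimes H ↔ X.Finite ∧ ∃ u ∈ X, IsUnit u := Iff.rfl

lemma mem_PfinOne {H : Type*} [Monoid H] {X : Set H} :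
    X ∈ PfinOne H ↔ X.Finite ∧ (1 : H) ∈ X := Iff.rfl

/-- Acyclic: `u * x * v ≠ x` whenever `u` or `v` is a non-unit. -/
def AcyclicM (M : Type*) [Monoid M] : Prop :=
  ∀ u v x : M, (¬ IsUnit u ∨ ¬ IsUnit v) → u * x * v ≠ x

/-- Unit-cancellative: `x * y ≠ x ≠ y * x` whenever `y` is a non-unit. -/
def UnitCancellativeM (M : Type*) [Monoid M] : Prop :=
  ∀ x y : M, ¬ IsUnit y → x * y ≠ x ∧ y * x ≠ x

/-- Strongly unit-cancellative: `x * y ≠ x ≠ y * x` whenever `y ≠ 1`. -/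
def StrongUnitCancellativeM (M : Type*) [Monoid M] : Prop :=
  ∀ x y : M, y ≠ 1 → x * y ≠ x ∧ y * x ≠ x

/-- Torsion-free: the identity is the only element with finitely many powers. -/
def TorsionFreeM (M : Type*) [Monoid M] : Prop :=
  ∀ x : M, (Set.range fun k : ℕ => x ^ k).Finite → x = 1

/-- Cancellative monoid. -/
def CancellativeM (M : Type*) [Monoid M] : Prop :=
  ∀ a x y : M, (a * x = a * y → x = y) ∧ (x * a = y * a → x = y)

/-- The set of lengths of (irreducible) factorizations of `x`, with the conventions
`L(1) = {0}` and `L(u) = ∅` for a unit-divisor `u ≠ 1`. -/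
def LengthSet {M : Type*} [Monoid M] (x : M) : Set ℕ :=
  {n | (x = 1 ∧ n = 0) ∨
    (¬ IsUnitDivisor x ∧
      ∃ l : List M, l.length = n ∧ l ≠ [] ∧ (∀ a ∈ l, IsIrredTS a) ∧ l.prod = x)}

/-- The system of lengths: the family of non-empty length sets. -/
def SystemOfLengths (M : Type*) [Monoid M] : Set (Set ℕ) :=
  {L | L.Nonempty ∧ ∃ x : M, LengthSet x = L}

section Gen
variable {M : Type*} [Monoid M]

lemma sandwich (u v : Mˣ) (y : M) : ↑u⁻¹ * (↑u * y * ↑v) * ↑v⁻¹ = y := by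
  simp [mul_assoc]

lemma dvdTS_congr_right (u v : Mˣ) {x y : M} : DvdTS x (↑u * y * ↑v) ↔ DvdTS x y := by
  constructor
  · rintro ⟨p, q, h⟩
    exact ⟨↑u⁻¹ * p, q * ↑v⁻¹, by rw [← sandwich u v y, h]; simp only [mul_assoc]⟩
  · rintro ⟨p, q, rfl⟩
    exact ⟨↑u * p, q * ↑v, by simp only [mul_assoc]⟩

lemma dvdTS_congr_left (u v : Mˣ) {x y : M} : DvdTS (↑u * y * ↑v) x ↔ DvdTS y x := by
  constructor
  · rintro ⟨p, q, rfl⟩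
    exact ⟨p * ↑u, ↑v * q, by simp only [mul_assoc]⟩
  · rintro ⟨p, q, rfl⟩
    refine ⟨p * ↑u⁻¹, ↑v⁻¹ * q, ?_⟩
    conv_lhs => rw [← sandwich u v y]
    simp only [mul_assoc]

lemma isUD_congr (u v : Mˣ) {a : M} : IsUnitDivisor (↑u * a * ↑v) ↔ IsUnitDivisor a :=
  dvdTS_congr_left u v

lemma isIrredTS_congr_aux (u v : Mˣ) {a : M} (ha : IsIrredTS a) : IsIrredTS (↑u * a * ↑v) := by
  refine ⟨by rw [isUD_congr]; exact ha.1, ?_⟩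
  rintro ⟨b, c, hbc, ⟨hbd, hbnd⟩, ⟨hcd, hcnd⟩, hbu, hcu⟩
  have hfact : a = (↑u⁻¹ * b) * (c * ↑v⁻¹) := by
    rw [← sandwich u v a, hbc]; simp only [mul_assoc]
  refine ha.2 ⟨↑u⁻¹ * b, c * ↑v⁻¹, hfact, ⟨⟨1, c * ↑v⁻¹, by rw [one_mul]; exact hfact⟩, ?_⟩,
    ⟨⟨↑u⁻¹ * b, 1, by rw [mul_one]; exact hfact⟩, ?_⟩, ?_, ?_⟩
  · rintro ⟨p, q, hb⟩
    apply hbnd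
    rw [dvdTS_congr_left u v]
    refine ⟨↑u * p, q, ?_⟩
    have : (↑u : M) * (↑u⁻¹ * b) = ↑u * (p * a * q) := by rw [hb]
    simpa [mul_assoc] using this
  · rintro ⟨p, q, hc⟩
    apply hcnd
    rw [dvdTS_congr_left u v]
    refine ⟨p, q * ↑v, ?_⟩
    have : (c * ↑v⁻¹) * ↑v = (p * a * q) * ↑v := by rw [hc]
    simpa [mul_assoc] using this
  · intro h
    apply hbu
    have : IsUnitDivisor (↑u * (↑u⁻¹ * b) * ↑(1 : Mˣ)) := (isUD_congr u 1).mpr h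
    simpa [← mul_assoc] using this
  · intro h
    apply hcu
    have : IsUnitDivisor (↑(1 : Mˣ) * (c * ↑v⁻¹) * ↑v) := (isUD_congr 1 v).mpr h
    simpa [mul_assoc] using this

lemma isIrredTS_congr (u v : Mˣ) {a : M} : IsIrredTS (↑u * a * ↑v) ↔ IsIrredTS a := by
  constructor
  · intro h
    have := isIrredTS_congr_aux u⁻¹ v⁻¹ h
    rwa [sandwich] at this
  · exact isIrredTS_congr_aux u v

lemma isIrredTS_unit_mul (u : Mˣ) {a : M} : IsIrredTS (↑u * a) ↔ IsIrredTS a := by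
  simpa using isIrredTS_congr u 1 (a := a)

lemma isIrredTS_mul_unit (v : Mˣ) {a : M} : IsIrredTS (a * ↑v) ↔ IsIrredTS a := by
  simpa using isIrredTS_congr 1 v (a := a)

lemma isUD_unit_mul (u : Mˣ) {a : M} : IsUnitDivisor (↑u * a) ↔ IsUnitDivisor a := by
  simpa using isUD_congr u 1 (a := a)

lemma lengthSet_one : LengthSet (1 : M) = {0} := by
  ext n
  simp only [LengthSet, Set.mem_setOf_eq, Set.mem_singleton_iff]
  constructor
  · rintro (⟨-, rfl⟩ | ⟨h, -⟩)
    · rfl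
    · exact absurd ⟨1, 1, by simp⟩ h
  · rintro rfl; exact Or.inl (by simp)

lemma lengthSet_ud_empty {x : M} (h : IsUnitDivisor x) (h1 : x ≠ 1) : LengthSet x = ∅ := by
  ext n
  simp only [LengthSet, Set.mem_setOf_eq, Set.mem_empty_iff_false, iff_false]
  rintro (⟨rfl, -⟩ | ⟨h', -⟩)
  · exact h1 rfl
  · exact h' h

lemma lengthSet_unit_mul (w : Mˣ) {z : M} (hz : ¬ IsUnitDivisor z) :
    LengthSet (↑w * z) = LengthSet z := by
  have hwz : ¬ IsUnitDivisor (↑w * z) := by rwa [isUD_unit_mul]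
  have hz1 : z ≠ 1 := fun h => hz (h ▸ ⟨1, 1, by simp⟩)
  have hwz1 : (↑w * z) ≠ 1 := fun h => hwz (h ▸ ⟨1, 1, by simp⟩)
  ext n
  simp only [LengthSet, Set.mem_setOf_eq, hz1, hwz1, false_and, false_or]
  constructor
  · rintro ⟨-, l, hlen, hne, hirr, hprod⟩
    obtain ⟨a, t, rfl⟩ := List.exists_cons_of_ne_nil hne
    refine ⟨hz, (↑w⁻¹ * a) :: t, by simpa using hlen, List.cons_ne_nil _ _, ?_, ?_⟩
    · rintro b hb
      rcases List.mem_cons.mp hb with rfl | hb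
      · exact (isIrredTS_unit_mul w⁻¹).mpr (hirr a List.mem_cons_self)
      · exact hirr b (List.mem_cons_of_mem _ hb)
    · have := hprod
      simp only [List.prod_cons] at this ⊢
      rw [mul_assoc, this, ← mul_assoc, Units.inv_mul, one_mul]
  · rintro ⟨-, l, hlen, hne, hirr, hprod⟩
    obtain ⟨a, t, rfl⟩ := List.exists_cons_of_ne_nil hne
    refine ⟨hwz, (↑w * a) :: t, by simpa using hlen, List.cons_ne_nil _ _, ?_, ?_⟩
    · rintro b hb
      rcases List.mem_cons.mp hb with rfl | hb
      · exact (isIrredTS_unit_mul w).mpr (hirr a List.mem_cons_self)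
      · exact hirr b (List.mem_cons_of_mem _ hb)
    · simp only [List.prod_cons] at hprod ⊢
      rw [mul_assoc, hprod]

end Gen

section Pow
variable {H : Type*} [Monoid H]

lemma pfinOne_le : PfinOne H ≤ PfinTimes H := fun X hX => ⟨hX.1, 1, hX.2, isUnit_one⟩

/-- inclusion hom -/
noncomputable def jmap : PfinOne H →* PfinTimes H := Submonoid.inclusion pfinOne_le

lemma jmap_coe (x : PfinOne H) : ((jmap x : PfinTimes H) : Set H) = ↑x := rfl

lemma jmap_inj : Function.Injective (jmap : PfinOne H → PfinTimes H) :=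
  fun a b h => Subtype.ext (congrArg (fun t : PfinTimes H => (t : Set H)) h)

lemma one_mem_one (x : PfinOne H) : (1 : H) ∈ (x : Set H) := x.2.2
lemma fin_one (x : PfinOne H) : (x : Set H).Finite := x.2.1
lemma fin_times (x : PfinTimes H) : (x : Set H).Finite := x.2.1

/-- singleton element of PfinTimes -/
def sElem (u : H) (hu : IsUnit u) : PfinTimes H := ⟨{u}, Set.finite_singleton u, u, rfl, hu⟩

/-- singleton unit of PfinTimes -/
def sUnit (u : Hˣ) : (PfinTimes H)ˣ where
  val := sElem (u : H) u.isUnit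
  inv := sElem ((u⁻¹ : Hˣ) : H) u⁻¹.isUnit
  val_inv := Subtype.ext (by
    show ({(u : H)} : Set H) * {((u⁻¹ : Hˣ) : H)} = 1
    rw [Set.singleton_mul_singleton, Units.mul_inv, Set.singleton_one])
  inv_val := Subtype.ext (by
    show ({((u⁻¹ : Hˣ) : H)} : Set H) * {(u : H)} = 1
    rw [Set.singleton_mul_singleton, Units.inv_mul, Set.singleton_one])

lemma coe_one_set : ((1 : PfinTimes H) : Set H) = {1} := by
  rw [Submonoid.coe_one, Set.singleton_one]

lemma ud_pfinOne_iff (x : PfinOne H) : IsUnitDivisor x ↔ x = 1 := by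
  constructor
  · rintro ⟨U, V, h⟩
    have hc : (↑U * ↑x * ↑V : Set H) = {1} := by
      rw [← Submonoid.coe_mul, ← Submonoid.coe_mul, ← h, Submonoid.coe_one, Set.singleton_one]
    apply Subtype.ext
    show (x : Set H) = ↑(1 : PfinOne H)
    rw [Submonoid.coe_one]
    ext t
    rw [Set.mem_one]
    constructor
    · intro ht
      have : (1 : H) * t * 1 ∈ (↑U * ↑x * ↑V : Set H) :=
        Set.mul_mem_mul (Set.mul_mem_mul (one_mem_one U) ht) (one_mem_one V)
      rw [hc] at this
      simpa using this
    · rintro rfl; exact one_mem_one x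
  · rintro rfl; exact ⟨1, 1, by simp⟩

lemma ud_pfinTimes_iff (y : PfinTimes H) (h1 : (1 : H) ∈ (y : Set H)) :
    IsUnitDivisor y ↔ y = 1 := by
  constructor
  · rintro ⟨U, V, h⟩
    have hc : (↑U * ↑y * ↑V : Set H) = {1} := by
      rw [← Submonoid.coe_mul, ← Submonoid.coe_mul, ← h, Submonoid.coe_one, Set.singleton_one]
    obtain ⟨a, haU, ha⟩ := U.2.2
    obtain ⟨c, hcV, hcu⟩ := V.2.2
    have key : ∀ t ∈ (y : Set H), a * t * c = 1 := by
      intro t ht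
      have : a * t * c ∈ (↑U * ↑y * ↑V : Set H) :=
        Set.mul_mem_mul (Set.mul_mem_mul haU ht) hcV
      rw [hc] at this
      simpa using this
    have hac : a * 1 * c = 1 := key 1 h1
    apply Subtype.ext
    show (y : Set H) = ↑(1 : PfinTimes H)
    rw [Submonoid.coe_one]
    ext t
    rw [Set.mem_one]
    constructor
    · intro ht
      have h2 : a * (t * c) = a * (1 * c) := by
        rw [← mul_assoc, ← mul_assoc, key t ht, hac]
      have h3 : t * c = 1 * c := ha.mul_left_cancel h2
      exact hcu.mul_right_cancel h3
    · rintro rfl; exact h1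
  · rintro rfl; exact ⟨1, 1, by simp⟩

lemma dvd_sub_eq {x y : PfinTimes H} (hsub : (y : Set H) ⊆ ↑x) (hd : DvdTS x y) : y = x := by
  obtain ⟨U, V, h⟩ := hd
  have hc : (y : Set H) = ↑U * ↑x * ↑V := by
    rw [h, Submonoid.coe_mul, Submonoid.coe_mul]
  obtain ⟨a, haU, ha⟩ := U.2.2
  obtain ⟨c, hcV, hcu⟩ := V.2.2
  have himg : (fun t => a * t * c) '' (x : Set H) ⊆ (y : Set H) := by
    rintro - ⟨t, ht, rfl⟩
    rw [hc]
    exact Set.mul_mem_mul (Set.mul_mem_mul haU ht) hcV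
  have hinj : Function.Injective (fun t : H => a * t * c) := by
    intro s t hst
    simp only at hst
    have h2 : s * c = t * c := ha.mul_left_cancel (by rw [← mul_assoc, ← mul_assoc, hst])
    exact hcu.mul_right_cancel h2
  have hcard : (x : Set H).ncard ≤ (y : Set H).ncard := by
    rw [← Set.ncard_image_of_injective (x : Set H) hinj]
    exact Set.ncard_le_ncard himg (fin_times y)
  exact Subtype.ext (Set.eq_of_subset_of_ncard_le hsub hcard (fin_times x))

end Pow

section Transfer
variable {H : Type*} [Monoid H]

lemma coe_hBC {x : PfinOne H} {B C : PfinTimes H} (h : jmap x = B * C) :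
    (x : Set H) = ↑B * ↑C := by
  have := congrArg (fun t : PfinTimes H => (t : Set H)) h
  simpa [Submonoid.coe_mul, jmap_coe] using this

lemma irred_transfer (hH : DedekindFiniteM H) (x : PfinOne H) :
    IsIrredTS x ↔ IsIrredTS (jmap x) := by
  constructor
  · intro hx
    refine ⟨?_, ?_⟩
    · intro h
      have h1 : (1 : H) ∈ ((jmap x : PfinTimes H) : Set H) := one_mem_one x
      have := (ud_pfinTimes_iff (jmap x) h1).mp h
      have hx1 : x = 1 := jmap_inj (by rw [this, map_one])
      exact hx.1 ((ud_pfinOne_iff x).mpr hx1)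
    · rintro ⟨B, C, hBC, ⟨hBd, hBnd⟩, ⟨hCd, hCnd⟩, hBu, hCu⟩
      have hBCc : (x : Set H) = ↑B * ↑C := coe_hBC hBC
      have h1 : (1 : H) ∈ ((B : Set H) * ↑C) := hBCc ▸ one_mem_one x
      obtain ⟨b, hb, c, hc, hbc⟩ := Set.mem_mul.mp h1
      have hcb : c * b = 1 := hH b c hbc
      have hbu : IsUnit b := ⟨⟨b, c, hbc, hcb⟩, rfl⟩
      have hcu' : IsUnit c := ⟨⟨c, b, hcb, hbc⟩, rfl⟩
      set B'' : PfinOne H := ⟨(B : Set H) * {c},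
        (fin_times B).mul (Set.finite_singleton c),
        by rw [← hbc]; exact Set.mul_mem_mul hb rfl⟩ with hB''
      set C'' : PfinOne H := ⟨({b} : Set H) * ↑C,
        (Set.finite_singleton b).mul (fin_times C),
        by rw [← hbc]; exact Set.mul_mem_mul rfl hc⟩ with hC''
      have hset : ((B : Set H) * {c}) * (({b} : Set H) * ↑C) = ↑B * ↑C := by
        rw [mul_assoc, ← mul_assoc ({c} : Set H), Set.singleton_mul_singleton, hcb,
          Set.singleton_one, one_mul]
      have hx2 : x = B'' * C'' := by
        apply Subtype.ext
        rw [Submonoid.coe_mul]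
        show (x : Set H) = ((B : Set H) * {c}) * (({b} : Set H) * ↑C)
        rw [hset, hBCc]
      apply hx.2
      refine ⟨B'', C'', hx2, ⟨⟨1, C'', by rw [one_mul]; exact hx2⟩, ?_⟩,
        ⟨⟨B'', 1, by rw [mul_one]; exact hx2⟩, ?_⟩, ?_, ?_⟩
      · rintro ⟨W, Z, hWZ⟩
        apply hBnd
        refine ⟨jmap W, jmap Z * sElem b hbu, ?_⟩
        apply Subtype.ext
        have hBc : ((B : Set H) * {c}) = ↑W * ↑x * ↑Z := by
          have := congrArg (fun t : PfinOne H => (t : Set H)) hWZ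
          rw [show ((B : Set H) * {c}) = ((B'' : PfinOne H) : Set H) from rfl, hWZ,
            Submonoid.coe_mul, Submonoid.coe_mul]
        show (B : Set H) = ↑W * ↑x * (↑Z * {b})
        calc (B : Set H) = ((B : Set H) * {c}) * {b} := by
              rw [mul_assoc, Set.singleton_mul_singleton, hcb, Set.singleton_one, mul_one]
          _ = (↑W * ↑x * ↑Z) * {b} := by rw [hBc]
          _ = ↑W * ↑x * (↑Z * {b}) := by rw [mul_assoc]
      · rintro ⟨W, Z, hWZ⟩
        apply hCnd
        refine ⟨sElem c hcu' * jmap W, jmap Z, ?_⟩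
        apply Subtype.ext
        have hCc : (({b} : Set H) * ↑C) = ↑W * ↑x * ↑Z := by
          have := congrArg (fun t : PfinOne H => (t : Set H)) hWZ
          rw [show (({b} : Set H) * ↑C) = ((C'' : PfinOne H) : Set H) from rfl, hWZ,
            Submonoid.coe_mul, Submonoid.coe_mul]
        show (C : Set H) = ({c} * ↑W) * ↑x * ↑Z
        calc (C : Set H) = {c} * (({b} : Set H) * ↑C) := by
              rw [← mul_assoc, Set.singleton_mul_singleton, hcb, Set.singleton_one, one_mul]
          _ = {c} * (↑W * ↑x * ↑Z) := by rw [hCc]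
          _ = ({c} * ↑W) * ↑x * ↑Z := by rw [← mul_assoc, ← mul_assoc]
      · intro h
        have hB1 : B'' = 1 := (ud_pfinOne_iff B'').mp h
        have hBset : (B : Set H) = {b} := by
          have hc1 : ((B : Set H) * {c}) = {1} := by
            have := congrArg (fun t : PfinOne H => (t : Set H)) hB1
            rw [show ((B : Set H) * {c}) = ((B'' : PfinOne H) : Set H) from rfl, hB1,
              Submonoid.coe_one, Set.singleton_one]
          calc (B : Set H) = ((B : Set H) * {c}) * {b} := by
                rw [mul_assoc, Set.singleton_mul_singleton, hcb, Set.singleton_one, mul_one]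
            _ = ({1} : Set H) * {b} := by rw [hc1]
            _ = {b} := by rw [Set.singleton_one, one_mul]
        apply hBu
        refine ⟨1, sElem c hcu', ?_⟩
        apply Subtype.ext
        rw [Submonoid.coe_mul, Submonoid.coe_mul, Submonoid.coe_one, one_mul]
        show ((1 : PfinTimes H) : Set H) = (B : Set H) * {c}
        rw [hBset, Set.singleton_mul_singleton, hbc, Set.singleton_one, Submonoid.coe_one]
      · intro h
        have hC1 : C'' = 1 := (ud_pfinOne_iff C'').mp h
        have hCset : (C : Set H) = {c} := by
          have hc1 : (({b} : Set H) * ↑C) = {1} := by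
            have := congrArg (fun t : PfinOne H => (t : Set H)) hC1
            rw [show (({b} : Set H) * ↑C) = ((C'' : PfinOne H) : Set H) from rfl, hC1,
              Submonoid.coe_one, Set.singleton_one]
          calc (C : Set H) = {c} * (({b} : Set H) * ↑C) := by
                rw [← mul_assoc, Set.singleton_mul_singleton, hcb, Set.singleton_one, one_mul]
            _ = ({c} : Set H) * {1} := by rw [hc1]
            _ = {c} := by rw [Set.singleton_one, mul_one]
        apply hCu
        refine ⟨sElem b hbu, 1, ?_⟩
        apply Subtype.ext
        rw [Submonoid.coe_mul, Submonoid.coe_mul, Submonoid.coe_one, mul_one]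
        show ((1 : PfinTimes H) : Set H) = ({b} : Set H) * (C : Set H)
        rw [hCset, Set.singleton_mul_singleton, hbc, Set.singleton_one, Submonoid.coe_one]
  · intro hjx
    refine ⟨?_, ?_⟩
    · intro h
      obtain ⟨U, V, hUV⟩ := h
      exact hjx.1 ((ud_pfinTimes_iff (jmap x) (one_mem_one x)).mpr
        (by rw [(ud_pfinOne_iff x).mp ⟨U, V, hUV⟩, map_one]))
    · rintro ⟨B, C, hBC, ⟨hBd, hBnd⟩, ⟨hCd, hCnd⟩, hBu, hCu⟩
      have hBCc : (x : Set H) = (B : Set H) * ↑C := by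
        have := congrArg (fun t : PfinOne H => (t : Set H)) hBC
        simpa [Submonoid.coe_mul] using this
      apply hjx.2
      refine ⟨jmap B, jmap C, by rw [hBC, map_mul],
        ⟨⟨1, jmap C, by rw [one_mul, ← map_mul, ← hBC]⟩, ?_⟩,
        ⟨⟨jmap B, 1, by rw [mul_one, ← map_mul, ← hBC]⟩, ?_⟩, ?_, ?_⟩
      · intro hd
        have hsub : ((jmap B : PfinTimes H) : Set H) ⊆ ((jmap x : PfinTimes H) : Set H) := by
          intro t ht
          show t ∈ (x : Set H)
          rw [hBCc]
          simpa [jmap_coe] using Set.mul_mem_mul ht (one_mem_one C)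
        have := jmap_inj (dvd_sub_eq hsub hd)
        exact hBnd ⟨1, 1, by rw [one_mul, mul_one, this]⟩
      · intro hd
        have hsub : ((jmap C : PfinTimes H) : Set H) ⊆ ((jmap x : PfinTimes H) : Set H) := by
          intro t ht
          show t ∈ (x : Set H)
          rw [hBCc]
          simpa [jmap_coe] using Set.mul_mem_mul (one_mem_one B) ht
        have := jmap_inj (dvd_sub_eq hsub hd)
        exact hCnd ⟨1, 1, by rw [one_mul, mul_one, this]⟩
      · intro h
        have := (ud_pfinTimes_iff (jmap B) (one_mem_one B)).mp h
        exact hBu ((ud_pfinOne_iff B).mpr (jmap_inj (by rw [this, map_one])))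
      · intro h
        have := (ud_pfinTimes_iff (jmap C) (one_mem_one C)).mp h
        exact hCu ((ud_pfinOne_iff C).mpr (jmap_inj (by rw [this, map_one])))

end Transfer

section Lists
variable {H : Type*} [Monoid H]

lemma sElem_mul_sElem {b c : H} (hb : IsUnit b) (hc : IsUnit c) (h : b * c = 1) :
    sElem b hb * sElem c hc = 1 := by
  apply Subtype.ext
  rw [Submonoid.coe_mul]
  show ({b} : Set H) * {c} = ↑(1 : PfinTimes H)
  rw [Set.singleton_mul_singleton, h, Set.singleton_one, Submonoid.coe_one]

lemma list_transfer (hH : DedekindFiniteM H) :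
    ∀ (n : ℕ) (l : List (PfinTimes H)), l.length = n → l ≠ [] →
      (∀ a ∈ l, IsIrredTS a) → ∀ x : PfinOne H, jmap x = l.prod →
      ∃ l' : List (PfinOne H), l'.length = n ∧ l' ≠ [] ∧
        (∀ a ∈ l', IsIrredTS a) ∧ l'.prod = x := by
  intro n
  induction n with
  | zero =>
    intro l hl hne
    exact absurd (List.length_eq_zero_iff.mp hl) hne
  | succ n ih =>
    intro l hl hne hirr x hx
    obtain ⟨B, t, rfl⟩ := List.exists_cons_of_ne_nil hne
    rcases eq_or_ne t [] with rfl | ht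
    · have hxB : jmap x = B := by simpa using hx
      have hn : n = 0 := by simpa using hl
      subst hn
      refine ⟨[x], rfl, by simp, ?_, by simp⟩
      intro a ha
      simp only [List.mem_singleton] at ha
      subst ha
      exact (irred_transfer hH a).mpr (hxB ▸ hirr B (by simp))
    · have hprod : jmap x = B * t.prod := by simpa [List.prod_cons] using hx
      have h1 : (1 : H) ∈ ((B : Set H) * ↑(t.prod)) := (coe_hBC hprod) ▸ one_mem_one x
      obtain ⟨b, hb, s, hs, hbs⟩ := Set.mem_mul.mp h1
      have hsb : s * b = 1 := hH b s hbs
      have hbu : IsUnit b := ⟨⟨b, s, hbs, hsb⟩, rfl⟩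
      have hsu : IsUnit s := ⟨⟨s, b, hsb, hbs⟩, rfl⟩
      set bu : (PfinTimes H)ˣ := sUnit ⟨b, s, hbs, hsb⟩ with hbu'
      set B₀ : PfinOne H := ⟨(B : Set H) * {s},
        (fin_times B).mul (Set.finite_singleton s),
        by rw [← hbs]; exact Set.mul_mem_mul hb rfl⟩ with hB₀
      set y : PfinOne H := ⟨({b} : Set H) * ↑(t.prod),
        (Set.finite_singleton b).mul (fin_times _),
        by rw [← hbs]; exact Set.mul_mem_mul rfl hs⟩ with hy
      obtain ⟨A, t', rfl⟩ := List.exists_cons_of_ne_nil ht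
      have hjy : jmap y = ↑bu * (A :: t').prod := by
        apply Subtype.ext
        rw [Submonoid.coe_mul]
        rfl
      have hlen2 : ((↑bu * A) :: t').length = n := by simpa using hl
      have hirr2 : ∀ a ∈ (↑bu * A) :: t', IsIrredTS a := by
        intro a ha
        rcases List.mem_cons.mp ha with rfl | ha
        · exact (isIrredTS_unit_mul bu).mpr (hirr A (by simp))
        · exact hirr a (by simp [ha])
      have hprod2 : jmap y = ((↑bu * A) :: t').prod := by
        rw [hjy, List.prod_cons, List.prod_cons, mul_assoc]
      obtain ⟨l', hlen', hne', hirr', hprod'⟩ :=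
        ih ((↑bu * A) :: t') hlen2 (List.cons_ne_nil _ _) hirr2 y hprod2
      have hjB₀ : jmap B₀ = B * ↑bu⁻¹ := by
        apply Subtype.ext
        rw [Submonoid.coe_mul]
        rfl
      refine ⟨B₀ :: l', by simpa using hlen', List.cons_ne_nil _ _, ?_, ?_⟩
      · intro a ha
        rcases List.mem_cons.mp ha with rfl | ha
        · refine (irred_transfer hH _).mpr ?_
          rw [hjB₀]
          exact (isIrredTS_mul_unit bu⁻¹).mpr (hirr B (by simp))
        · exact hirr' a ha
      · rw [List.prod_cons, hprod']
        apply jmap_inj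
        rw [map_mul, hjB₀, hjy, hprod, mul_assoc, ← mul_assoc (↑bu⁻¹ : PfinTimes H),
          Units.inv_mul, one_mul, List.prod_cons]

lemma lengthSet_jmap (hH : DedekindFiniteM H) (x : PfinOne H) :
    LengthSet (jmap x) = LengthSet x := by
  have hud : IsUnitDivisor (jmap x) ↔ IsUnitDivisor x := by
    rw [ud_pfinTimes_iff (jmap x) (one_mem_one x), ud_pfinOne_iff]
    constructor
    · intro h; exact jmap_inj (by rw [h, map_one])
    · intro h; rw [h, map_one]
  have h1 : jmap x = 1 ↔ x = 1 := by
    constructor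
    · intro h; exact jmap_inj (by rw [h, map_one])
    · intro h; rw [h, map_one]
  ext n
  simp only [LengthSet, Set.mem_setOf_eq]
  constructor
  · rintro (⟨he, rfl⟩ | ⟨hu, l, hlen, hne, hirr, hprod⟩)
    · exact Or.inl ⟨h1.mp he, rfl⟩
    · refine Or.inr ⟨fun h => hu (hud.mpr h), ?_⟩
      obtain ⟨l', hlen', hne', hirr', hprod'⟩ :=
        list_transfer hH n l hlen hne hirr x hprod.symm
      exact ⟨l', hlen', hne', hirr', hprod'⟩
  · rintro (⟨he, rfl⟩ | ⟨hu, l, hlen, hne, hirr, hprod⟩)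
    · exact Or.inl ⟨h1.mpr he, rfl⟩
    · refine Or.inr ⟨fun h => hu (hud.mp h), l.map jmap, by simpa using hlen,
        by simpa using hne, ?_, by rw [← map_list_prod, hprod]⟩
      intro a ha
      obtain ⟨a', ha', rfl⟩ := List.mem_map.mp ha
      exact (irred_transfer hH a').mp (hirr a' ha')

end Lists

/-- if `H` is Dedekind-finite, then `P_{fin,1}(H)` and `P_{fin,×}(H)` have the
same system of lengths. -/
theorem systems_of_lengths_eq {H : Type*} [Monoid H] (hH : DedekindFiniteM H) :
    SystemOfLengths (PfinOne H) = SystemOfLengths (PfinTimes H) := by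
  ext L
  simp only [SystemOfLengths, Set.mem_setOf_eq]
  constructor
  · rintro ⟨hne, x, rfl⟩
    exact ⟨hne, jmap x, lengthSet_jmap hH x⟩
  · rintro ⟨hne, y, rfl⟩
    refine ⟨hne, ?_⟩
    by_cases hud : IsUnitDivisor y
    · rcases eq_or_ne y 1 with rfl | hy1
      · exact ⟨1, by rw [lengthSet_one, lengthSet_one]⟩
      · rw [lengthSet_ud_empty hud hy1] at hne
        exact absurd hne Set.not_nonempty_empty
    · obtain ⟨u, hu, huu⟩ := y.2.2
      obtain ⟨u0, rfl⟩ := huu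
      set w : (PfinTimes H)ˣ := sUnit u0 with hw
      set x : PfinOne H := ⟨({((u0⁻¹ : Hˣ) : H)} : Set H) * ↑y,
        (Set.finite_singleton _).mul (fin_times y),
        by
          have := Set.mul_mem_mul (Set.mem_singleton ((u0⁻¹ : Hˣ) : H)) hu
          rwa [Units.inv_mul] at this⟩ with hx
      have hjx : jmap x = ↑w⁻¹ * y := by
        apply Subtype.ext
        rw [Submonoid.coe_mul]
        rfl
      refine ⟨x, ?_⟩
      rw [← lengthSet_jmap hH x, hjx]
      exact lengthSet_unit_mul w⁻¹ hud
end

section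
/- For a monoid H, the reduced finitary power monoid P_{fin,1}(H) is a BF monoid (i.e., it is factorable and all of its length sets are finite) if and only if H is torsion-free. -/
open scoped Pointwise

section Aux

variable {H : Type*} [Monoid H]

lemma PfinOne.one_mem' (X : PfinOne H) : (1 : H) ∈ (X : Set H) := X.2.2

lemma PfinOne.finite' (X : PfinOne H) : (X : Set H).Finite := X.2.1

lemma PfinOne.coe_one' : ((1 : PfinOne H) : Set H) = {1} := rfl

lemma PfinOne.unitDivisor_iff (X : PfinOne H) : IsUnitDivisor X ↔ X = 1 := by
  constructor
  · rintro ⟨U, V, hUV⟩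
    have hval : ((1 : PfinOne H) : Set H) = (U : Set H) * (X : Set H) * (V : Set H) := by
      rw [hUV]; push_cast; ring_nf
    apply Subtype.ext
    rw [PfinOne.coe_one']
    apply Set.eq_singleton_iff_unique_mem.mpr
    refine ⟨PfinOne.one_mem' X, fun x hx => ?_⟩
    have hmem : (1 : H) * x * 1 ∈ (U : Set H) * (X : Set H) * (V : Set H) :=
      Set.mul_mem_mul (Set.mul_mem_mul (PfinOne.one_mem' U) hx) (PfinOne.one_mem' V)
    rw [← hval, PfinOne.coe_one'] at hmem
    simpa using hmem
  · rintro rfl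
    exact ⟨1, 1, by simp⟩

lemma PfinOne.ne_one_iff (X : PfinOne H) : X ≠ 1 ↔ ∃ x ∈ (X : Set H), x ≠ 1 := by
  constructor
  · intro h
    by_contra hc
    push_neg at hc
    apply h
    apply Subtype.ext
    rw [PfinOne.coe_one']
    exact Set.eq_singleton_iff_unique_mem.mpr ⟨PfinOne.one_mem' X, hc⟩
  · rintro ⟨x, hx, hx1⟩ rfl
    rw [PfinOne.coe_one'] at hx
    exact hx1 (by simpa using hx)

lemma PfinOne.subset_mul_left (X Y : PfinOne H) :
    (X : Set H) ⊆ ((X * Y : PfinOne H) : Set H) := by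
  intro x hx
  have : x * 1 ∈ (X : Set H) * (Y : Set H) := Set.mul_mem_mul hx (PfinOne.one_mem' Y)
  simpa using this

lemma PfinOne.subset_mul_right (X Y : PfinOne H) :
    (Y : Set H) ⊆ ((X * Y : PfinOne H) : Set H) := by
  intro y hy
  have : (1 : H) * y ∈ (X : Set H) * (Y : Set H) := Set.mul_mem_mul (PfinOne.one_mem' X) hy
  simpa using this

/-- Key lemma: over a torsion-free monoid, the reduced power monoid is strongly
unit-cancellative. -/
lemma PfinOne.mul_ne_self (htf : TorsionFreeM H) (X Y : PfinOne H) (hY : Y ≠ 1) :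
    X * Y ≠ X ∧ Y * X ≠ X := by
  obtain ⟨y, hyY, hy1⟩ := (PfinOne.ne_one_iff Y).mp hY
  constructor
  · intro h
    have hval : (X : Set H) * (Y : Set H) = (X : Set H) := by
      have := congrArg (Subtype.val) h; push_cast at this; exact this
    have hpow : ∀ k : ℕ, y ^ k ∈ (X : Set H) := by
      intro k
      induction k with
      | zero => simpa using PfinOne.one_mem' X
      | succ n ih =>
        rw [pow_succ]
        rw [← hval]
        exact Set.mul_mem_mul ih hyY
    have hfin : (Set.range fun k : ℕ => y ^ k).Finite :=
      (PfinOne.finite' X).subset (by rintro _ ⟨k, rfl⟩; exact hpow k)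
    exact hy1 (htf y hfin)
  · intro h
    have hval : (Y : Set H) * (X : Set H) = (X : Set H) := by
      have := congrArg (Subtype.val) h; push_cast at this; exact this
    have hpow : ∀ k : ℕ, y ^ k ∈ (X : Set H) := by
      intro k
      induction k with
      | zero => simpa using PfinOne.one_mem' X
      | succ n ih =>
        rw [pow_succ']
        rw [← hval]
        exact Set.mul_mem_mul hyY ih
    have hfin : (Set.range fun k : ℕ => y ^ k).Finite :=
      (PfinOne.finite' X).subset (by rintro _ ⟨k, rfl⟩; exact hpow k)
    exact hy1 (htf y hfin)

lemma PfinOne.ncard_lt_left (htf : TorsionFreeM H) (X Y : PfinOne H) (hY : Y ≠ 1) :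
    (X : Set H).ncard < ((X * Y : PfinOne H) : Set H).ncard := by
  apply Set.ncard_lt_ncard _ (PfinOne.finite' (X * Y))
  refine ⟨PfinOne.subset_mul_left X Y, fun hsub => ?_⟩
  exact (PfinOne.mul_ne_self htf X Y hY).1
    (Subtype.ext (Set.Subset.antisymm hsub (PfinOne.subset_mul_left X Y)))

lemma PfinOne.ncard_lt_right (htf : TorsionFreeM H) (X Y : PfinOne H) (hX : X ≠ 1) :
    (Y : Set H).ncard < ((X * Y : PfinOne H) : Set H).ncard := by
  apply Set.ncard_lt_ncard _ (PfinOne.finite' (X * Y))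
  refine ⟨PfinOne.subset_mul_right X Y, fun hsub => ?_⟩
  exact (PfinOne.mul_ne_self htf Y X hX).2
    (Subtype.ext (Set.Subset.antisymm hsub (PfinOne.subset_mul_right X Y)))

lemma PfinOne.length_le_of_prod (htf : TorsionFreeM H) :
    ∀ l : List (PfinOne H), (∀ a ∈ l, a ≠ 1) →
      l.length + 1 ≤ ((l.prod : PfinOne H) : Set H).ncard := by
  intro l
  induction l with
  | nil =>
    intro _
    show [].length + 1 ≤ ((1 : PfinOne H) : Set H).ncard
    rw [PfinOne.coe_one', Set.ncard_singleton]
    simp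
  | cons a l ih =>
    intro h
    have ha : a ≠ 1 := h a List.mem_cons_self
    have hl : ∀ b ∈ l, b ≠ 1 := fun b hb => h b (List.mem_cons_of_mem a hb)
    have h1 : ((l.prod : PfinOne H) : Set H).ncard <
        ((a * l.prod : PfinOne H) : Set H).ncard :=
      PfinOne.ncard_lt_right htf a l.prod ha
    have h2 := ih hl
    rw [List.prod_cons, List.length_cons]
    omega

end Aux

/-- `P_{fin,1}(H)` is a BF-monoid iff `H` is torsion-free. -/
theorem pfinOne_BF_iff_torsion_free (H : Type*) [Monoid H] :
    (FactorableM (PfinOne H) ∧ ∀ X : PfinOne H, (LengthSet X).Finite) ↔ TorsionFreeM H := by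
  constructor
  · -- BF implies torsion-free
    rintro ⟨hfact, hlen⟩ x hxfin
    by_contra hx1
    have hXmem : ({1, x} : Set H) ∈ PfinOne H :=
      ⟨(Set.finite_singleton x).insert 1, by simp⟩
    set X : PfinOne H := ⟨{1, x}, hXmem⟩ with hXdef
    have hX1 : X ≠ 1 := by
      rw [PfinOne.ne_one_iff]
      exact ⟨x, by simp [hXdef], hx1⟩
    -- powers of X live in the range of powers of x
    have hsub : ∀ n : ℕ, ((X ^ n : PfinOne H) : Set H) ⊆ Set.range fun k : ℕ => x ^ k := by
      intro n
      induction n with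
      | zero =>
        rw [pow_zero, PfinOne.coe_one']
        rintro z hz
        exact ⟨0, by simpa using hz.symm⟩
      | succ n ih =>
        rw [pow_succ]
        have : ((X ^ n * X : PfinOne H) : Set H) =
            ((X ^ n : PfinOne H) : Set H) * (X : Set H) := by push_cast; ring_nf
        rw [this]
        rintro z ⟨a, ha, b, hb, rfl⟩
        obtain ⟨i, rfl⟩ := ih ha
        rcases hb with hb | hb
        · exact ⟨i, by simp [hb]⟩
        · have hbx : b = x := hb
          exact ⟨i + 1, by simp [hbx, pow_succ]⟩
    have hmono : ∀ n : ℕ, ((X ^ n : PfinOne H) : Set H) ⊆ ((X ^ (n + 1) : PfinOne H) : Set H) := by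
      intro n
      rw [pow_succ]
      exact PfinOne.subset_mul_left (X ^ n) X
    -- the sequence of cardinalities stabilizes
    set f : ℕ → ℕ := fun n => ((X ^ n : PfinOne H) : Set H).ncard with hfdef
    have hbdd : ∀ n, f n ≤ (Set.range fun k : ℕ => x ^ k).ncard := fun n =>
      Set.ncard_le_ncard (hsub n) hxfin
    have hstab : ∃ n : ℕ, f n = f (n + 1) := by
      by_contra hc
      push_neg at hc
      have hsm : StrictMono f := strictMono_nat_of_lt_succ fun n =>
        lt_of_le_of_ne (Set.ncard_le_ncard (hmono n) (PfinOne.finite' (X ^ (n + 1)))) (hc n)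
      have h1 : (Set.range fun k : ℕ => x ^ k).ncard + 1 ≤
          f ((Set.range fun k : ℕ => x ^ k).ncard + 1) := hsm.le_apply
      have h2 := hbdd ((Set.range fun k : ℕ => x ^ k).ncard + 1)
      omega
    obtain ⟨n, hn⟩ := hstab
    have hXeq : X ^ (n + 1) = X ^ n := by
      apply Subtype.ext
      exact (Set.eq_of_subset_of_ncard_le (hmono n) hn.ge (PfinOne.finite' (X ^ (n + 1)))).symm
    have hstable : ∀ m : ℕ, X ^ (n + m) = X ^ n := by
      intro m
      induction m with
      | zero => rfl
      | succ m ih =>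
        have : X ^ (n + (m + 1)) = X ^ (n + m) * X := by rw [← pow_succ]; ring_nf
        rw [this, ih, ← pow_succ, hXeq]
    set Y : PfinOne H := X ^ (n + 1) with hYdef
    have hYstable : ∀ m : ℕ, X ^ (n + 1 + m) = Y := by
      intro m
      have h1 : n + 1 + m = n + (1 + m) := by ring
      rw [hYdef, h1, hstable (1 + m), ← hstable 1]
    have hxY : x ∈ (Y : Set H) := by
      have : (X : Set H) ⊆ ((X ^ (n + 1) : PfinOne H) : Set H) := by
        have h1 : X ^ (n + 1) = X ^ n * X := by rw [← pow_succ]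
        rw [h1]
        exact PfinOne.subset_mul_right (X ^ n) X
      exact this (by simp [hXdef])
    have hY1 : Y ≠ 1 := (PfinOne.ne_one_iff Y).mpr ⟨x, hxY, hx1⟩
    have hYnud : ¬ IsUnitDivisor Y := fun h => hY1 ((PfinOne.unitDivisor_iff Y).mp h)
    have hXnud : ¬ IsUnitDivisor X := fun h => hX1 ((PfinOne.unitDivisor_iff X).mp h)
    obtain ⟨l, hlne, hlirr, hlprod⟩ := hfact X hXnud
    have hlpos : 1 ≤ l.length := List.length_pos_iff.mpr hlne
    -- arbitrarily long factorizations of Y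
    have hmem : ∀ m : ℕ, (n + 1 + m) * l.length ∈ LengthSet Y := by
      intro m
      have hLlen : (List.replicate (n + 1 + m) l).flatten.length = (n + 1 + m) * l.length := by
        simp [List.length_flatten, List.map_replicate, mul_comm]
      refine Or.inr ⟨hYnud, (List.replicate (n + 1 + m) l).flatten, hLlen, ?_, ?_, ?_⟩
      · intro hfl
        rw [hfl] at hLlen
        have h0 : (n + 1 + m) * l.length = 0 := by simpa using hLlen.symm
        rcases Nat.mul_eq_zero.mp h0 with h | h <;> omega
      · intro a ha
        rw [List.mem_flatten] at ha
        obtain ⟨s, hs, has⟩ := ha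
        rw [List.eq_of_mem_replicate hs] at has
        exact hlirr a has
      · rw [List.prod_flatten, List.map_replicate, List.prod_replicate, hlprod]
        exact hYstable m
    have hinf : (LengthSet Y).Infinite := by
      apply Set.infinite_of_injective_forall_mem
        (f := fun m : ℕ => (n + 1 + m) * l.length) _ hmem
      intro a b hab
      simp only at hab
      have h := Nat.eq_of_mul_eq_mul_right (by omega : 0 < l.length) hab
      omega
    exact hinf (hlen Y)
  · -- torsion-free implies BF
    intro htf
    constructor
    · -- factorable
      have key : ∀ N : ℕ, ∀ X : PfinOne H, (X : Set H).ncard ≤ N → ¬ IsUnitDivisor X →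
          ∃ l : List (PfinOne H), l ≠ [] ∧ (∀ a ∈ l, IsIrredTS a) ∧ l.prod = X := by
        intro N
        induction N using Nat.strong_induction_on with
        | _ N ih =>
          intro X hcard hXnud
          by_cases hirr : IsIrredTS X
          · exact ⟨[X], by simp, by simpa using hirr, by simp⟩
          · rw [IsIrredTS] at hirr
            push_neg at hirr
            obtain ⟨B, C, hBC, hBp, hCp, hBnud, hCnud⟩ := hirr hXnud
            have hB1 : B ≠ 1 := fun h => hBnud ((PfinOne.unitDivisor_iff B).mpr h)
            have hC1 : C ≠ 1 := fun h => hCnud ((PfinOne.unitDivisor_iff C).mpr h)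
            have hBlt : (B : Set H).ncard < (X : Set H).ncard := by
              rw [hBC]; exact PfinOne.ncard_lt_left htf B C hC1
            have hClt : (C : Set H).ncard < (X : Set H).ncard := by
              rw [hBC]; exact PfinOne.ncard_lt_right htf B C hB1
            obtain ⟨lB, hlBne, hlBirr, hlBprod⟩ :=
              ih (B : Set H).ncard (lt_of_lt_of_le hBlt hcard) B le_rfl hBnud
            obtain ⟨lC, hlCne, hlCirr, hlCprod⟩ :=
              ih (C : Set H).ncard (lt_of_lt_of_le hClt hcard) C le_rfl hCnud
            refine ⟨lB ++ lC, by simp [hlBne], ?_, ?_⟩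
            · intro a ha
              rcases List.mem_append.mp ha with h | h
              · exact hlBirr a h
              · exact hlCirr a h
            · rw [List.prod_append, hlBprod, hlCprod, hBC]
      intro X hXnud
      exact key (X : Set H).ncard X le_rfl hXnud
    · -- length sets are finite
      intro X
      apply Set.Finite.subset (Set.finite_Iic ((X : Set H).ncard))
      rintro n (⟨_, rfl⟩ | ⟨_, l, hlen', hlne, hlirr, hlprod⟩)
      · exact Nat.zero_le _
      · have hne1 : ∀ a ∈ l, a ≠ 1 := by
          intro a ha h1
          exact (hlirr a ha).1 ((PfinOne.unitDivisor_iff a).mpr h1)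
        have := PfinOne.length_le_of_prod htf l hne1
        rw [hlprod, hlen'] at this
        simpa using Nat.le_of_succ_le_succ (by omega)
end
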